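/- arXiv:1612.07389 — 2 statements merged into one kernel-verified Lean document; each statement's English description precedes it below -/
import Mathlib

section
/- For a nonnegative measurable function p on Ω × ℝ^N with Ω ⊂ ℝ^N bounded, and μ > ℓ > 0, there is a constant C depending only on N, μ, ℓ such that ‖∫_{ℝ^N} |v|^ℓ p(·,v) dv‖_{L^{(N+μ)/(N+ℓ)}(Ω)} ≤ C ‖p‖_{L^∞(Ω×ℝ^N)}^{(μ-ℓ)/(N+μ)} ‖|v|^μ p‖_{L¹(Ω×ℝ^N)}^{(N+ℓ)/(N+μ)}, provided the involved quantities are finite. -/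
open MeasureTheory Metric Filter Topology

/-!
Fix `x` and split the `v`-integral at a radius `R`. Inside the ball `|v|^ℓ p ≤ R^ℓ ‖p‖_∞`, which
integrates to `c R^(N+ℓ) ‖p‖_∞` with `c` the volume of the unit ball; outside it
`|v|^ℓ p ≤ R^(ℓ-μ) |v|^μ p`. Balancing the two terms with `R^(N+μ) = m(x)/‖p‖_∞`, where
`m(x) = ∫ |v|^μ p(x,v) dv`, gives the pointwise bound
`∫ |v|^ℓ p(x,v) dv ≤ (c+1) ‖p‖_∞^((μ-ℓ)/(N+μ)) m(x)^((N+ℓ)/(N+μ))`; raising it to the power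
`(N+μ)/(N+ℓ)` makes the right-hand side linear in `m`, and integrating over `Ω` concludes.
-/

section OptimalRadius

variable {n ℓ μ m M : ℝ}

lemma mul_rpow_add_eq_rpow_sub_mul (hnμ : 0 < n + μ) (hm : 0 < m) (hM : 0 < M) :
    M * ((m / M) ^ (n + μ)⁻¹) ^ (n + ℓ) = ((m / M) ^ (n + μ)⁻¹) ^ (ℓ - μ) * m := by
  set R := (m / M) ^ (n + μ)⁻¹
  have hR : 0 < R := by positivity
  have hRnμ : R ^ (n + μ) = m / M := by
    rw [← Real.rpow_mul (by positivity), inv_mul_cancel₀ hnμ.ne', Real.rpow_one]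
  calc M * R ^ (n + ℓ) = M * R ^ (n + μ) * R ^ (ℓ - μ) := by
        rw [mul_assoc, ← Real.rpow_add hR]; ring_nf
    _ = R ^ (ℓ - μ) * m := by rw [hRnμ]; field_simp

lemma rpow_sub_mul_eq (hnμ : 0 < n + μ) (hm : 0 < m) (hM : 0 < M) :
    ((m / M) ^ (n + μ)⁻¹) ^ (ℓ - μ) * m
      = M ^ ((μ - ℓ) / (n + μ)) * m ^ ((n + ℓ) / (n + μ)) := by
  have hnμ' := hnμ.ne'
  rw [← Real.rpow_mul (by positivity), Real.div_rpow hm.le hM.le, div_mul_eq_mul_div,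
    ← Real.rpow_add_one hm.ne', div_eq_mul_inv, ← Real.rpow_neg hM.le, mul_comm]
  congr 2 <;> field_simp <;> ring

end OptimalRadius

lemma rpow_norm_mul_le_indicator_add {E : Type*} [SeminormedAddCommGroup E] {ℓ μ R M a : ℝ}
    (v : E) (hℓ : 0 ≤ ℓ) (hℓμ : ℓ ≤ μ) (hR : 0 < R) (ha : 0 ≤ a) (haM : a ≤ M) :
    ‖v‖ ^ ℓ * a ≤ (ball 0 R).indicator (fun _ => R ^ ℓ * M) v + R ^ (ℓ - μ) * (‖v‖ ^ μ * a) := by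
  by_cases hv : v ∈ ball (0 : E) R
  · rw [Set.indicator_of_mem hv]
    have hvR : ‖v‖ ≤ R := (mem_ball_zero_iff.mp hv).le
    have hnear : ‖v‖ ^ ℓ * a ≤ R ^ ℓ * M := by gcongr
    have : 0 ≤ R ^ (ℓ - μ) * (‖v‖ ^ μ * a) := by positivity
    linarith
  · rw [Set.indicator_of_notMem hv, zero_add]
    have hRv : R ≤ ‖v‖ := by simpa using hv
    have hv0 : 0 < ‖v‖ := hR.trans_le hRv
    calc ‖v‖ ^ ℓ * a = ‖v‖ ^ (ℓ - μ) * (‖v‖ ^ μ * a) := by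
          rw [← mul_assoc, ← Real.rpow_add hv0, sub_add_cancel]
      _ ≤ R ^ (ℓ - μ) * (‖v‖ ^ μ * a) := by
          gcongr ?_ * _
          exact Real.rpow_le_rpow_of_nonpos hR hRv (by linarith)

section Interpolation

variable {E : Type*} [NormedAddCommGroup E] [NormedSpace ℝ E] [MeasurableSpace E] [BorelSpace E]
  [FiniteDimensional ℝ E] (ρ : Measure E) [ρ.IsAddHaarMeasure]

lemma integral_rpow_norm_mul_le_of_radius {ℓ μ R M : ℝ} {g : E → ℝ} (hℓ : 0 ≤ ℓ) (hℓμ : ℓ ≤ μ)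
    (hR : 0 < R) (hg0 : ∀ v, 0 ≤ g v) (hgM : ∀ v, g v ≤ M)
    (hint : Integrable (fun v => ‖v‖ ^ μ * g v) ρ) :
    ∫ v, ‖v‖ ^ ℓ * g v ∂ρ
      ≤ M * ρ.real (ball 0 1) * R ^ ((Module.finrank ℝ E : ℝ) + ℓ)
        + R ^ (ℓ - μ) * ∫ v, ‖v‖ ^ μ * g v ∂ρ := by
  have hball : ρ.real (ball (0 : E) R) = R ^ Module.finrank ℝ E * ρ.real (ball 0 1) := by
    rw [measureReal_def, Measure.addHaar_ball_of_pos ρ _ hR, ENNReal.toReal_mul,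
      ENNReal.toReal_ofReal (by positivity), measureReal_def]
  calc ∫ v, ‖v‖ ^ ℓ * g v ∂ρ
      ≤ ∫ v, (ball 0 R).indicator (fun _ => R ^ ℓ * M) v
          + R ^ (ℓ - μ) * (‖v‖ ^ μ * g v) ∂ρ := by
        refine integral_mono_of_nonneg (.of_forall fun v => by positivity [hg0 v]) ?_
          (.of_forall fun v => rpow_norm_mul_le_indicator_add v hℓ hℓμ hR (hg0 v) (hgM v))
        exact ((integrable_indicator_iff measurableSet_ball).mpr
          (integrableOn_const measure_ball_lt_top.ne)).add (hint.const_mul _)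
    _ = M * ρ.real (ball 0 1) * R ^ ((Module.finrank ℝ E : ℝ) + ℓ)
        + R ^ (ℓ - μ) * ∫ v, ‖v‖ ^ μ * g v ∂ρ := by
        rw [integral_add ((integrable_indicator_iff measurableSet_ball).mpr
          (integrableOn_const measure_ball_lt_top.ne)) (hint.const_mul _),
          integral_indicator_const _ measurableSet_ball, integral_const_mul, hball, smul_eq_mul,
          Real.rpow_add hR, Real.rpow_natCast]
        ring

lemma integral_rpow_norm_mul_le {ℓ μ M : ℝ} {g : E → ℝ} (hℓ : 0 < ℓ) (hℓμ : ℓ < μ)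
    (hg0 : ∀ v, 0 ≤ g v) (hgM : ∀ v, g v ≤ M) (hint : Integrable (fun v => ‖v‖ ^ μ * g v) ρ) :
    ∫ v, ‖v‖ ^ ℓ * g v ∂ρ
      ≤ (ρ.real (ball 0 1) + 1) * M ^ ((μ - ℓ) / ((Module.finrank ℝ E : ℝ) + μ))
        * (∫ v, ‖v‖ ^ μ * g v ∂ρ)
          ^ (((Module.finrank ℝ E : ℝ) + ℓ) / ((Module.finrank ℝ E : ℝ) + μ)) := by
  have hbound R (hR : 0 < R) :=
    integral_rpow_norm_mul_le_of_radius ρ hℓ.le hℓμ.le hR hg0 hgM hint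
  set n : ℝ := (Module.finrank ℝ E : ℝ)
  set m := ∫ v, ‖v‖ ^ μ * g v ∂ρ
  have hnℓ : 0 < n + ℓ := by positivity
  have hnμ : 0 < n + μ := by linarith
  have hm0 : 0 ≤ m := integral_nonneg fun v => by positivity [hg0 v]
  rcases hm0.eq_or_lt with hm | hm
  · -- with no `μ`-moment the bound at radius `R` tends to `0` as `R → 0`
    rw [← hm, Real.zero_rpow (div_pos hnℓ hnμ).ne', mul_zero]
    have hlim : Tendsto (fun R => M * ρ.real (ball 0 1) * R ^ (n + ℓ)) (𝓝[>] 0) (𝓝 0) := by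
      have := ((Real.continuousAt_rpow_const 0 (n + ℓ) (.inr hnℓ.le)).const_mul
        (M * ρ.real (ball (0 : E) 1))).tendsto
      rw [Real.zero_rpow hnℓ.ne', mul_zero] at this
      exact tendsto_nhdsWithin_of_tendsto_nhds this
    refine ge_of_tendsto hlim (eventually_nhdsWithin_of_forall fun R (hR : 0 < R) => ?_)
    simpa [← hm] using hbound R hR
  · have hM : 0 < M := by
      refine lt_of_le_of_ne ((hg0 0).trans (hgM 0)) fun hM0 => hm.ne' ?_
      have hg : ∀ v, g v = 0 := fun v => le_antisymm (hM0 ▸ hgM v) (hg0 v)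
      simp only [m, hg, mul_zero, integral_zero]
    calc ∫ v, ‖v‖ ^ ℓ * g v ∂ρ
        ≤ M * ρ.real (ball 0 1) * ((m / M) ^ (n + μ)⁻¹) ^ (n + ℓ)
          + ((m / M) ^ (n + μ)⁻¹) ^ (ℓ - μ) * m := hbound _ (by positivity)
      _ = _ := by
        rw [mul_right_comm, mul_rpow_add_eq_rpow_sub_mul hnμ hm hM, rpow_sub_mul_eq hnμ hm hM]
        ring

end Interpolation

lemma rpow_setIntegral_rpow_le {X : Type*} [MeasurableSpace X] {ρ : Measure X} {s : Set X}
    (hs : MeasurableSet s) {f m : X → ℝ} {K α q : ℝ} (hK : 0 ≤ K) (hα : 0 < α) (hαq : α * q = 1)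
    (hf0 : ∀ x ∈ s, 0 ≤ f x) (hm0 : ∀ x ∈ s, 0 ≤ m x) (hfm : ∀ x ∈ s, f x ≤ K * m x ^ α)
    (hm : IntegrableOn m s ρ) :
    (∫ x in s, f x ^ q ∂ρ) ^ α ≤ K * (∫ x in s, m x ∂ρ) ^ α := by
  have hq : 0 < q := pos_of_mul_pos_right (hαq ▸ one_pos) hα.le
  have hfqm : ∀ x ∈ s, f x ^ q ≤ K ^ q * m x := fun x hx => calc
    f x ^ q ≤ (K * m x ^ α) ^ q := Real.rpow_le_rpow (hf0 x hx) (hfm x hx) hq.le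
    _ = K ^ q * m x := by
      rw [Real.mul_rpow hK (by positivity [hm0 x hx]), ← Real.rpow_mul (hm0 x hx), hαq,
        Real.rpow_one]
  have hint : ∫ x in s, f x ^ q ∂ρ ≤ K ^ q * ∫ x in s, m x ∂ρ := by
    rw [← integral_const_mul]
    exact integral_mono_of_nonneg
      (ae_restrict_of_forall_mem hs fun x hx => by positivity [hf0 x hx])
      (hm.const_mul _) (ae_restrict_of_forall_mem hs hfqm)
  calc (∫ x in s, f x ^ q ∂ρ) ^ α ≤ (K ^ q * ∫ x in s, m x ∂ρ) ^ α :=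
        Real.rpow_le_rpow (setIntegral_nonneg hs fun x hx => by positivity [hf0 x hx]) hint hα.le
    _ = K * (∫ x in s, m x ∂ρ) ^ α := by
        rw [Real.mul_rpow (by positivity) (setIntegral_nonneg hs hm0), ← Real.rpow_mul hK,
          mul_comm q, hαq, Real.rpow_one]

/-- Marginal moment interpolation: there is `C = C(N,μ,ℓ)` such that
`‖∫ |v|^ℓ p dv‖_{L^{(N+μ)/(N+ℓ)}(Ω)} ≤ C ‖p‖_∞^{(μ-ℓ)/(N+μ)} ‖|v|^μ p‖_{L¹}^{(N+ℓ)/(N+μ)}`. -/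
theorem stmt1 (N : ℕ) (ℓ μ : ℝ) (hℓ : 0 < ℓ) (hℓμ : ℓ < μ) :
    ∃ C : ℝ, 0 < C ∧
      ∀ (Ω : Set (EuclideanSpace ℝ (Fin N))), Bornology.IsBounded Ω → MeasurableSet Ω →
      ∀ (p : EuclideanSpace ℝ (Fin N) → EuclideanSpace ℝ (Fin N) → ℝ),
        Measurable (fun z : EuclideanSpace ℝ (Fin N) × EuclideanSpace ℝ (Fin N) => p z.1 z.2) →
        (∀ x v, 0 ≤ p x v) →
      ∀ M : ℝ, (∀ x v, p x v ≤ M) →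
        (∀ x ∈ Ω, Integrable (fun v => ‖v‖ ^ μ * p x v)) →
        IntegrableOn (fun x => ∫ v, ‖v‖ ^ μ * p x v) Ω →
        IntegrableOn (fun x => (∫ v, ‖v‖ ^ ℓ * p x v) ^ (((N : ℝ) + μ) / ((N : ℝ) + ℓ))) Ω →
        (∫ x in Ω, (∫ v, ‖v‖ ^ ℓ * p x v) ^ (((N : ℝ) + μ) / ((N : ℝ) + ℓ))) ^
            (((N : ℝ) + ℓ) / ((N : ℝ) + μ))
          ≤ C * M ^ ((μ - ℓ) / ((N : ℝ) + μ)) *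
              (∫ x in Ω, ∫ v, ‖v‖ ^ μ * p x v) ^ (((N : ℝ) + ℓ) / ((N : ℝ) + μ)) := by
  refine ⟨volume.real (ball (0 : EuclideanSpace ℝ (Fin N)) 1) + 1, by positivity, ?_⟩
  intro Ω _ hΩ p _ hp0 M hpM hpμ hmΩ _
  have hpointwise : ∀ x ∈ Ω, ∫ v, ‖v‖ ^ ℓ * p x v
      ≤ (volume.real (ball (0 : EuclideanSpace ℝ (Fin N)) 1) + 1) * M ^ ((μ - ℓ) / ((N : ℝ) + μ))
        * (∫ v, ‖v‖ ^ μ * p x v) ^ (((N : ℝ) + ℓ) / ((N : ℝ) + μ)) := fun x hx => by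
    simpa only [finrank_euclideanSpace_fin] using
      integral_rpow_norm_mul_le volume hℓ hℓμ (hp0 x) (hpM x) (hpμ x hx)
  have hM : 0 ≤ M := (hp0 0 0).trans (hpM 0 0)
  have hNℓ : 0 < (N : ℝ) + ℓ := by positivity
  have hNμ : 0 < (N : ℝ) + μ := by linarith
  exact rpow_setIntegral_rpow_le hΩ (by positivity) (div_pos hNℓ hNμ) (by field_simp)
    (fun x _ => integral_nonneg fun v => by positivity [hp0 x v])
    (fun x _ => integral_nonneg fun v => by positivity [hp0 x v]) hpointwise hmΩ
end

section
/- For a nonnegative measurable function p on Ω × ℝ^N and μ > N, there exists a constant C_μ depending only on μ and N such that the marginal density satisfies ‖∫_{ℝ^N} p(·,v) dv‖_{L^∞(Ω)} ≤ C_μ ‖p‖_{L^∞(Ω×ℝ^N)}^{1-N/μ} ‖(1+|v|²)^{μ/2} p‖_{L^∞(Ω×ℝ^N)}^{N/μ}. -/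
/-!
Pointwise, `p(x, v) ≤ min (M, W ‖v‖^{-μ}) = M k(v / R)` with `k u = max (1, ‖u‖)^{-μ}` and
`R = (W / M)^{1/μ}`, the radius where the two bounds cross. Rescaling `v = R u` gives
`∫ p(x, v) dv ≤ M R^N ∫ k = M^{1-N/μ} W^{N/μ} ∫ k`, and `∫ k < ∞` because `μ > N`.
-/

open MeasureTheory Module Real

theorem rpow_neg_max_one_le_two_rpow_mul {t μ : ℝ} (ht : 0 ≤ t) (hμ : 0 ≤ μ) :
    max 1 t ^ (-μ) ≤ 2 ^ μ * (1 + t) ^ (-μ) := by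
  have hm : 0 < max 1 t := lt_max_of_lt_left one_pos
  have hle : 1 + t ≤ 2 * max 1 t := by linarith [le_max_left 1 t, le_max_right 1 t]
  calc max 1 t ^ (-μ) = 2 ^ μ * (2 * max 1 t) ^ (-μ) := by
        rw [mul_rpow zero_le_two hm.le, rpow_neg zero_le_two, mul_inv_cancel_left₀
          (rpow_pos_of_pos two_pos μ).ne']
    _ ≤ 2 ^ μ * (1 + t) ^ (-μ) :=
        mul_le_mul_of_nonneg_left
          (rpow_le_rpow_of_nonpos (by positivity) hle (neg_nonpos.mpr hμ)) (by positivity)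

section Kernel

variable {E : Type*} [NormedAddCommGroup E] [NormedSpace ℝ E] [FiniteDimensional ℝ E]
  [MeasurableSpace E] [BorelSpace E] (ν : Measure E) [ν.IsAddHaarMeasure]

theorem integrable_max_one_norm_rpow_neg {μ : ℝ} (hμ : (finrank ℝ E : ℝ) < μ) :
    Integrable (fun u : E ↦ max 1 ‖u‖ ^ (-μ)) ν := by
  have hμ0 : 0 ≤ μ := (Nat.cast_nonneg _).trans hμ.le
  refine ((integrable_one_add_norm hμ).const_mul (2 ^ μ)).mono'
    ((continuous_const.max continuous_norm).rpow_const
      fun _ ↦ Or.inl (lt_max_of_lt_left one_pos).ne').aestronglyMeasurable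
    (ae_of_all _ fun u ↦ ?_)
  rw [norm_of_nonneg (by positivity)]
  exact rpow_neg_max_one_le_two_rpow_mul (norm_nonneg u) hμ0

theorem integral_max_one_norm_rpow_neg_pos {μ : ℝ} (hμ : (finrank ℝ E : ℝ) < μ) :
    0 < ∫ u, max 1 ‖u‖ ^ (-μ) ∂ν := by
  rw [integral_pos_iff_support_of_nonneg (fun u ↦ by positivity)
    (integrable_max_one_norm_rpow_neg ν hμ)]
  have : Function.support (fun u : E ↦ max 1 ‖u‖ ^ (-μ)) = Set.univ :=
    Set.eq_univ_of_forall fun u ↦ (rpow_pos_of_pos (lt_max_of_lt_left one_pos) _).ne'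
  rw [this]
  exact Measure.measure_univ_pos.mpr (NeZero.ne ν)

end Kernel

theorem le_mul_rpow_neg_max_one_div {a M R t μ : ℝ} (ha : 0 ≤ a) (hR : 0 < R) (ht : 0 ≤ t)
    (hμ : 0 ≤ μ) (haM : a ≤ M) (haW : (1 + t ^ 2) ^ (μ / 2) * a ≤ M * R ^ μ) :
    a ≤ M * max 1 (t / R) ^ (-μ) := by
  have hm : 0 < max 1 (t / R) := lt_max_of_lt_left one_pos
  rw [rpow_neg hm.le, ← div_eq_mul_inv, le_div_iff₀ (rpow_pos_of_pos hm μ)]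
  rcases max_cases 1 (t / R) with ⟨h, -⟩ | ⟨h, -⟩
  · rwa [h, one_rpow, mul_one]
  · have htμ : t ^ μ ≤ (1 + t ^ 2) ^ (μ / 2) :=
      calc t ^ μ = (t ^ 2) ^ (μ / 2) := by
            rw [← rpow_natCast, ← rpow_mul ht]
            ring_nf
        _ ≤ (1 + t ^ 2) ^ (μ / 2) := rpow_le_rpow (by positivity) (by linarith) (by positivity)
    rw [h, div_rpow ht hR.le, mul_div_assoc', div_le_iff₀ (rpow_pos_of_pos hR μ)]
    exact (mul_le_mul_of_nonneg_left htμ ha).trans (by linarith)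

theorem mul_rpow_div_rpow_inv_pow {M W μ d : ℝ} (hM : 0 < M) (hW : 0 ≤ W) :
    M * ((W / M) ^ μ⁻¹) ^ d = M ^ (1 - d / μ) * W ^ (d / μ) := by
  rw [← rpow_mul (div_nonneg hW hM.le), div_rpow hW hM.le, rpow_sub hM, rpow_one,
    inv_mul_eq_div]
  ring

theorem integral_le_mul_rpow_of_le_of_weighted_le {E : Type*} [NormedAddCommGroup E]
    [NormedSpace ℝ E] [FiniteDimensional ℝ E] [MeasurableSpace E] [BorelSpace E]
    (ν : Measure E) [ν.IsAddHaarMeasure] {μ M W : ℝ} (hμ : (finrank ℝ E : ℝ) < μ)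
    {f : E → ℝ} (hf : ∀ v, 0 ≤ f v) (hfM : ∀ v, f v ≤ M)
    (hfW : ∀ v, (1 + ‖v‖ ^ 2) ^ (μ / 2) * f v ≤ W) :
    ∫ v, f v ∂ν ≤ (∫ u, max 1 ‖u‖ ^ (-μ) ∂ν) *
      M ^ (1 - finrank ℝ E / μ) * W ^ (finrank ℝ E / μ) := by
  set d : ℝ := (finrank ℝ E : ℝ)
  have hμ0 : 0 < μ := (Nat.cast_nonneg _).trans_lt hμ
  have hfW_le : ∀ v, f v ≤ W := fun v ↦
    (le_mul_of_one_le_left (hf v) (one_le_rpow (by simp) (by positivity))).trans (hfW v)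
  have hM_nonneg : 0 ≤ M := (hf 0).trans (hfM 0)
  have hW_nonneg : 0 ≤ W := (hf 0).trans (hfW_le 0)
  by_cases hMW : 0 < M ∧ 0 < W
  swap
  · have hf0 : ∀ v, f v ≤ 0 := fun v ↦
      (le_min (hfM v) (hfW_le v)).trans (not_lt.mp fun h ↦ hMW (lt_min_iff.mp h))
    exact (integral_nonpos hf0).trans
      (by have := integral_max_one_norm_rpow_neg_pos ν hμ; positivity)
  obtain ⟨hM, hW⟩ := hMW
  -- the scale at which the two bounds `M` and `W ‖v‖^{-μ}` cross
  set R := (W / M) ^ μ⁻¹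
  have hR : 0 < R := rpow_pos_of_pos (div_pos hW hM) _
  have hRμ : M * R ^ μ = W := by
    rw [rpow_inv_rpow (div_nonneg hW.le hM.le) hμ0.ne', mul_div_cancel₀ _ hM.ne']
  have hbound : ∀ v, f v ≤ M * max 1 ‖R⁻¹ • v‖ ^ (-μ) := fun v ↦ by
    rw [norm_smul, norm_inv, norm_of_nonneg hR.le, inv_mul_eq_div]
    exact le_mul_rpow_neg_max_one_div (hf v) hR (norm_nonneg v) hμ0.le (hfM v) (hRμ ▸ hfW v)
  calc ∫ v, f v ∂ν ≤ ∫ v, M * max 1 ‖R⁻¹ • v‖ ^ (-μ) ∂ν :=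
        integral_mono_of_nonneg (ae_of_all _ hf)
          (((integrable_max_one_norm_rpow_neg ν hμ).comp_smul (inv_ne_zero hR.ne')).const_mul M)
          (ae_of_all _ hbound)
    _ = M * R ^ d * ∫ u, max 1 ‖u‖ ^ (-μ) ∂ν := by
        rw [integral_const_mul,
          Measure.integral_comp_inv_smul_of_nonneg ν (fun u ↦ max 1 ‖u‖ ^ (-μ)) hR.le, smul_eq_mul, rpow_natCast, mul_assoc]
    _ = _ := by rw [mul_rpow_div_rpow_inv_pow hM hW.le]; ring

/-- L^∞ bound of the marginal density:
`‖∫ p dv‖_{L^∞(Ω)} ≤ C_μ ‖p‖_∞^{1-N/μ} ‖(1+|v|²)^{μ/2} p‖_∞^{N/μ}` for `μ > N`. -/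
theorem stmt2 (N : ℕ) (μ : ℝ) (hμ : (N : ℝ) < μ) :
    ∃ C : ℝ, 0 < C ∧
      ∀ (Ω : Set (EuclideanSpace ℝ (Fin N))), MeasurableSet Ω →
      ∀ (p : EuclideanSpace ℝ (Fin N) → EuclideanSpace ℝ (Fin N) → ℝ),
        Measurable (fun z : EuclideanSpace ℝ (Fin N) × EuclideanSpace ℝ (Fin N) => p z.1 z.2) →
        (∀ x v, 0 ≤ p x v) →
      ∀ M W : ℝ, 0 ≤ M → 0 ≤ W →
        (∀ x v, p x v ≤ M) →
        (∀ x v, (1 + ‖v‖ ^ 2) ^ (μ / 2) * p x v ≤ W) →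
        ∀ x ∈ Ω, (∫ v, p x v) ≤ C * M ^ (1 - (N : ℝ) / μ) * W ^ ((N : ℝ) / μ) := by
  have hfin : (finrank ℝ (EuclideanSpace ℝ (Fin N)) : ℝ) < μ := by
    rwa [finrank_euclideanSpace_fin]
  refine ⟨_, integral_max_one_norm_rpow_neg_pos volume hfin, ?_⟩
  intro Ω _ p _ hp M W _ _ hpM hpW x _
  simpa only [finrank_euclideanSpace_fin] using
    integral_le_mul_rpow_of_le_of_weighted_le volume hfin (hp x) (hpM x) (hpW x)
end
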